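/- Define, for a Boolean function η : {0,1}^3 → {0,1}, the induced map on the four pairs (x,y) ∈ {0,1}^2 given by (x,y) ↦ (η(1,x,y), η(0,y,x)) — interpreting ◇1 ↦ ρ(1)=η(1,◇1,◇0) and ◇0 ↦ ρ(0)=η(0,◇0,◇1). Then exactly 24 of the 256 Boolean functions η induce a bijection of {0,1}^2, and these induced bijections are exactly all 24 permutations of the 4-element set {0,1}^2. -/
import Mathlib

/-- The map on the primary labels `(◇1, ◇0) ∈ {0,1}²` induced by the uniform
replacement with defining Boolean function `η(a,b,c)`:
`(x,y) ↦ (η(1,x,y), η(0,y,x))`. -/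
def inducedLabelMap (η : Bool → Bool → Bool → Bool) : Bool × Bool → Bool × Bool :=
  fun p => (η true p.1 p.2, η false p.2 p.1)

/-- Exactly 24 of the 256 Boolean functions `η` induce a bijection of `{0,1}²`, and
every permutation of the 4-element set `{0,1}²` is induced by some `η`. -/
theorem stmt_12 :
    Nat.card {η : Bool → Bool → Bool → Bool // Function.Bijective (inducedLabelMap η)}
      = 24 ∧
    ∀ e : Equiv.Perm (Bool × Bool), ∃ η : Bool → Bool → Bool → Bool,
      inducedLabelMap η = ⇑e := by
  constructor
  · rw [Nat.card_eq_fintype_card]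
    decide
  · intro e
    exact ⟨fun a b c => if a then (e (b, c)).1 else (e (c, b)).2, funext fun p => rfl⟩
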